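/- In the convex setting (CP), suppose x̂ ∈ 𝒳 satisfies c_i(x̂) < 0 for all i. Let x ∈ 𝒳 with c_i(x) ≤ 0 for all i, and let z* ∈ 𝒳, μ ∈ ℝ^m_{≥0}, l ∈ ∂r(z*) satisfy the GHMA subproblem KKT conditions at x. Let C₁ > 0 satisfy ‖x − z*‖ ≤ C₁, ‖x − x̂‖ ≤ C₁ and ‖z* − x̂‖ ≤ C₁, and let F* ∈ ℝ satisfy F* ≤ F(z*). If ‖z* − x‖ ≤ min_{i∈[m]} (−c_i(x̂)/(6L_iC₁))^{1/κ}, then ‖μ‖_∞ ≤ (2(F(x̂) − F*) + 4L·C₁^{κ+1}) / min_{i∈[m]}(−c_i(x̂)). -/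

import Mathlib

/-!
Test the stationarity condition of the subproblem at the Slater point `x̂`, and write
`u = x̂ - z*`, `d = z* - x`. Convexity of `f` at `z*` and the Hölder bound on `∇f` between
`x` and `z*` bound the objective part by `f x̂ - f z* + 2L‖d‖^κ‖u‖`, and `l ∈ ∂r(z*)` bounds
its part by `r x̂ - r z*`. For the `i`-th constraint, convexity of `cᵢ` at `x` together with
complementary slackness gives at most `μᵢ (cᵢ x̂ + 2Lᵢ C₁‖d‖^κ)`, and the smallness of `‖d‖`
makes this `≤ (2/3) μᵢ cᵢ x̂`. Hence `(2/3) μⱼ minᵢ(-cᵢ x̂) ≤ F x̂ - F* + 2L C₁^(κ+1)`.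
-/

open scoped RealInnerProductSpace
open Real Set

/-- The convex subdifferential of `r` at `u`. -/
def subgrad {n : ℕ} (r : EuclideanSpace ℝ (Fin n) → ℝ)
    (u : EuclideanSpace ℝ (Fin n)) : Set (EuclideanSpace ℝ (Fin n)) :=
  {l | ∀ z, r u + ⟪l, z - u⟫ ≤ r z}

section InnerProductSpace

variable {E : Type*} [NormedAddCommGroup E] [InnerProductSpace ℝ E]

theorem norm_rpow_sub_one_smul {κ : ℝ} (hκ : κ ≠ 0) (d : E) :
    ‖(‖d‖ ^ (κ - 1)) • d‖ = ‖d‖ ^ κ := by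
  rcases eq_or_ne d 0 with rfl | hd
  · simp [Real.zero_rpow hκ]
  · rw [norm_smul, norm_of_nonneg (by positivity),
      ← Real.rpow_add_one (norm_ne_zero_iff.mpr hd), sub_add_cancel]

theorem real_inner_mul_rpow_smul_le {K κ : ℝ} (hK : 0 ≤ K) (hκ : 0 < κ) (d u : E) :
    ⟪(K * ‖d‖ ^ (κ - 1)) • d, u⟫ ≤ K * (‖d‖ ^ κ * ‖u‖) := by
  rw [mul_smul, real_inner_smul_left, ← norm_rpow_sub_one_smul hκ.ne' d]
  exact mul_le_mul_of_nonneg_left (real_inner_le_norm _ _) hK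

variable [CompleteSpace E]

theorem ConvexOn.add_inner_le_of_hasGradientAt {s : Set E} {f : E → ℝ} {g x y : E}
    (hconv : ConvexOn ℝ s f) (hx : x ∈ s) (hy : y ∈ s) (hg : HasGradientAt f g x) :
    f x + ⟪g, y - x⟫ ≤ f y := by
  set φ : ℝ → ℝ := f ∘ AffineMap.lineMap x y
  have hφ : ConvexOn ℝ (AffineMap.lineMap x y ⁻¹' s) φ := hconv.comp_affineMap _
  have hline : HasDerivAt (AffineMap.lineMap x y) (y - x) (0 : ℝ) :=
    AffineMap.hasDerivAt_lineMap
  have hderiv : HasDerivAt φ ⟪g, y - x⟫ 0 := by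
    have hg' : HasFDerivAt f (InnerProductSpace.toDual ℝ E g) (AffineMap.lineMap x y (0 : ℝ)) := by
      simpa using hg.hasFDerivAt
    simpa using hg'.comp_hasDerivAt (0 : ℝ) hline
  have hslope := hφ.le_slope_of_hasDerivAt (by simpa) (by simpa) one_pos hderiv
  rw [slope_def_field] at hslope
  simp only [φ, Function.comp_apply, AffineMap.lineMap_apply_zero,
    AffineMap.lineMap_apply_one] at hslope
  linarith

theorem ConvexOn.real_inner_sub_le_of_hasGradientAt {s : Set E} {f : E → ℝ} {g g' y z : E}
    {δ : ℝ} (hconv : ConvexOn ℝ s f) (hz : z ∈ s) (hy : y ∈ s) (hg : HasGradientAt f g z)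
    (hδ : ‖g' - g‖ ≤ δ) :
    ⟪g', y - z⟫ ≤ f y - f z + δ * ‖y - z‖ := by
  have hfirst := hconv.add_inner_le_of_hasGradientAt hz hy hg
  have hdev : ⟪g' - g, y - z⟫ ≤ δ * ‖y - z‖ :=
    (real_inner_le_norm _ _).trans (mul_le_mul_of_nonneg_right hδ (norm_nonneg _))
  rw [inner_sub_left] at hdev
  linarith

theorem ConvexOn.mul_inner_le_of_complementary_slackness {s : Set E} {c : E → ℝ}
    {g x y z : E} {μ q : ℝ} (hconv : ConvexOn ℝ s c) (hx : x ∈ s) (hy : y ∈ s)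
    (hg : HasGradientAt c g x) (hμ : 0 ≤ μ) (hcomp : μ * (c x + ⟪g, z - x⟫ + q) = 0) :
    μ * ⟪g, y - z⟫ ≤ μ * (c y + q) := by
  have hfirst := mul_le_mul_of_nonneg_left (hconv.add_inner_le_of_hasGradientAt hx hy hg) hμ
  have hsplit : ⟪g, y - z⟫ = ⟪g, y - x⟫ - ⟪g, z - x⟫ := by
    rw [← inner_sub_right, sub_sub_sub_cancel_right]
  rw [hsplit]
  linear_combination hfirst - hcomp

theorem ConvexOn.inner_holderModelGrad_le {s : Set E} {f : E → ℝ} {f' : E → E} {x y z : E}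
    {L κ : ℝ} (hconv : ConvexOn ℝ s f) (hz : z ∈ s) (hy : y ∈ s)
    (hg : HasGradientAt f (f' z) z) (hL : 0 ≤ L) (hκ : 0 < κ)
    (hholder : ‖f' x - f' z‖ ≤ L * ‖x - z‖ ^ κ) :
    ⟪f' x + (L * ‖z - x‖ ^ (κ - 1)) • (z - x), y - z⟫ ≤
      f y - f z + 2 * L * (‖z - x‖ ^ κ * ‖y - z‖) := by
  rw [norm_sub_rev x z] at hholder
  have hlin := hconv.real_inner_sub_le_of_hasGradientAt hz hy hg hholder
  have hmodel := real_inner_mul_rpow_smul_le hL hκ (z - x) (y - z)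
  rw [inner_add_left]
  linarith

theorem ConvexOn.mul_inner_holderModelGrad_le {s : Set E} {c : E → ℝ} {g x y z : E}
    {μ K κ C : ℝ} (hconv : ConvexOn ℝ s c) (hx : x ∈ s) (hy : y ∈ s)
    (hg : HasGradientAt c g x) (hμ : 0 ≤ μ) (hK : 0 ≤ K) (hκ : 0 < κ)
    (hcomp : μ * (c x + ⟪g, z - x⟫ + K / (κ + 1) * ‖z - x‖ ^ (κ + 1)) = 0)
    (hzx : ‖z - x‖ ≤ C) (hyz : ‖y - z‖ ≤ C) (hsmall : 6 * K * C * ‖z - x‖ ^ κ ≤ -c y) :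
    μ * ⟪g + (K * ‖z - x‖ ^ (κ - 1)) • (z - x), y - z⟫ ≤ μ * (2 / 3 * c y) := by
  set t := ‖z - x‖
  have hslack := hconv.mul_inner_le_of_complementary_slackness hx hy hg hμ hcomp
  have hmodel := real_inner_mul_rpow_smul_le hK hκ (z - x) (y - z)
  have hslackTerm : K / (κ + 1) * t ^ (κ + 1) ≤ K * C * t ^ κ := by
    rw [Real.rpow_add_one' (norm_nonneg _) (by linarith), mul_assoc K C, mul_comm C]
    gcongr
    exact div_le_self hK (by linarith)
  have hmodelTerm : K * (t ^ κ * ‖y - z‖) ≤ K * C * t ^ κ := by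
    rw [mul_assoc, mul_comm C]
    gcongr
  rw [inner_add_left, mul_add]
  calc μ * ⟪g, y - z⟫ + μ * ⟪(K * t ^ (κ - 1)) • (z - x), y - z⟫
      ≤ μ * (c y + K / (κ + 1) * t ^ (κ + 1)) + μ * (K * (t ^ κ * ‖y - z‖)) := by gcongr
    _ ≤ μ * (2 / 3 * c y) := by
      rw [← mul_add]
      exact mul_le_mul_of_nonneg_left (by linarith) hμ

end InnerProductSpace

theorem mul_rpow_le_of_le_div_rpow_one_div {s a b κ : ℝ} (hs : 0 ≤ s) (ha : 0 ≤ a)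
    (hb : 0 < b) (hκ : 0 < κ) (h : s ≤ (a / b) ^ (1 / κ)) : b * s ^ κ ≤ a := by
  rw [one_div, Real.le_rpow_inv_iff_of_pos hs (div_nonneg ha hb.le) hκ, le_div_iff₀ hb] at h
  linarith

theorem ghma_dual_boundedness_general {n m : ℕ} (hm : 0 < m)
    (X : Set (EuclideanSpace ℝ (Fin n)))
    (f r : EuclideanSpace ℝ (Fin n) → ℝ)
    (c : Fin m → EuclideanSpace ℝ (Fin n) → ℝ)
    (f' : EuclideanSpace ℝ (Fin n) → EuclideanSpace ℝ (Fin n))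
    (c' : Fin m → EuclideanSpace ℝ (Fin n) → EuclideanSpace ℝ (Fin n))
    (hf : ∀ x, HasGradientAt f (f' x) x)
    (hc : ∀ i x, HasGradientAt (c i) (c' i x) x)
    (hfconv : ConvexOn ℝ univ f) (hcconv : ∀ i, ConvexOn ℝ univ (c i))
    (κ L : ℝ) (Li : Fin m → ℝ)
    (hκ0 : 0 < κ) (hL : 0 < L) (hLi : ∀ i, 0 < Li i)
    (hfholder : ∀ x y, ‖f' x - f' y‖ ≤ L * ‖x - y‖ ^ κ)
    -- the Slater point
    (xhat : EuclideanSpace ℝ (Fin n)) (hxhatX : xhat ∈ X) (hxhat : ∀ i, c i xhat < 0)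
    -- the feasible base point
    (x : EuclideanSpace ℝ (Fin n))
    -- KKT conditions of the GHMA subproblem (CP_x)
    (zstar : EuclideanSpace ℝ (Fin n))
    (μ : Fin m → ℝ) (hμ : ∀ i, 0 ≤ μ i)
    (l : EuclideanSpace ℝ (Fin n)) (hl : l ∈ subgrad r zstar)
    (hstat : ∀ z ∈ X, 0 ≤
      ⟪f' x + (L * ‖zstar - x‖ ^ (κ - 1)) • (zstar - x) +
        (∑ i, μ i • (c' i x + (Li i * ‖zstar - x‖ ^ (κ - 1)) • (zstar - x))) + l,
        z - zstar⟫)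
    (hcomp : ∀ i, μ i * (c i x + ⟪c' i x, zstar - x⟫ +
      (Li i / (κ + 1)) * ‖zstar - x‖ ^ (κ + 1)) = 0)
    -- the constants
    (C₁ : ℝ) (hC₁ : 0 < C₁)
    (hC₁a : ‖x - zstar‖ ≤ C₁) (hC₁c : ‖zstar - xhat‖ ≤ C₁)
    (Fstar : ℝ) (hFstar : Fstar ≤ f zstar + r zstar)
    -- smallness of the residual: ‖z* − x‖ ≤ min_i (−cᵢ(x̂)/(6LᵢC₁))^{1/κ}
    (hsmall : ∀ i, ‖zstar - x‖ ≤ (-c i xhat / (6 * Li i * C₁)) ^ (1 / κ)) :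
    ∀ i, μ i ≤ (2 * ((f xhat + r xhat) - Fstar) + 4 * L * C₁ ^ (κ + 1)) /
      (Finset.univ.inf' ⟨⟨0, hm⟩, Finset.mem_univ _⟩ fun j => -c j xhat) := by
  intro j
  set M := Finset.univ.inf' ⟨⟨0, hm⟩, Finset.mem_univ _⟩ fun j => -c j xhat
  have hM : 0 < M := (Finset.lt_inf'_iff _).2 fun i _ => neg_pos.2 (hxhat i)
  have hMj : M ≤ -c j xhat := Finset.inf'_le _ (Finset.mem_univ j)
  rw [norm_sub_rev] at hC₁a hC₁c
  have hslater := hstat xhat hxhatX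
  simp only [inner_add_left (x := f' x + _ + _), inner_add_left (x := f' x + _), sum_inner,
    real_inner_smul_left] at hslater
  have hobj := hfconv.inner_holderModelGrad_le (mem_univ _) (mem_univ _) (hf zstar) hL.le hκ0
    (hfholder x zstar) (y := xhat)
  have hcon : ∑ i, μ i * ⟪c' i x + (Li i * ‖zstar - x‖ ^ (κ - 1)) • (zstar - x), xhat - zstar⟫
      ≤ ∑ i, μ i * (2 / 3 * c i xhat) := Finset.sum_le_sum fun i _ =>
    (hcconv i).mul_inner_holderModelGrad_le (mem_univ _) (mem_univ _) (hc i x) (hμ i)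
      (hLi i).le hκ0 (hcomp i) hC₁a hC₁c
      (mul_rpow_le_of_le_div_rpow_one_div (norm_nonneg _) (neg_nonneg.2 (hxhat i).le)
        (by have := hLi i; positivity) hκ0 (hsmall i))
  have hsum : ∑ i, μ i * (2 / 3 * c i xhat) ≤ μ j * (2 / 3 * c j xhat) := by
    simpa using Finset.sum_le_sum_of_subset_of_nonpos' (Finset.subset_univ {j})
      fun i _ _ => mul_nonpos_of_nonneg_of_nonpos (hμ i) (by linarith [hxhat i])
  have hreg : r zstar + ⟪l, xhat - zstar⟫ ≤ r xhat := hl xhat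
  have hres : 2 * L * (‖zstar - x‖ ^ κ * ‖xhat - zstar‖) ≤ 2 * L * C₁ ^ (κ + 1) := by
    rw [Real.rpow_add_one' hC₁.le (by linarith)]
    gcongr
  -- `μⱼ M ≥ 0` lets the factor `3/2` from the constraint bound be relaxed to `2`
  have hμM : 0 ≤ μ j * M := mul_nonneg (hμ j) hM.le
  rw [le_div_iff₀ hM]
  linarith [mul_le_mul_of_nonneg_left hMj (hμ j)]

/-- (Lemma 2 in the paper: dual boundedness for GHMA in the convex
setting.)  Given a strictly feasible Slater point `x̂` and the GHMA subproblem KKT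
conditions at a feasible `x`, if the residual `‖z* − x‖` is at most
`min_i (−cᵢ(x̂)/(6LᵢC₁))^{1/κ}`, then
`‖μ‖_∞ ≤ (2(F(x̂) − F*) + 4LC₁^{κ+1}) / min_i(−cᵢ(x̂))`. -/
theorem ghma_dual_boundedness {n m : ℕ} (hm : 0 < m)
    (X : Set (EuclideanSpace ℝ (Fin n))) (hXconv : Convex ℝ X) (hXclosed : IsClosed X)
    (f r : EuclideanSpace ℝ (Fin n) → ℝ)
    (c : Fin m → EuclideanSpace ℝ (Fin n) → ℝ)
    (f' : EuclideanSpace ℝ (Fin n) → EuclideanSpace ℝ (Fin n))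
    (c' : Fin m → EuclideanSpace ℝ (Fin n) → EuclideanSpace ℝ (Fin n))
    (hf : ∀ x, HasGradientAt f (f' x) x)
    (hc : ∀ i x, HasGradientAt (c i) (c' i x) x)
    (hfconv : ConvexOn ℝ univ f) (hcconv : ∀ i, ConvexOn ℝ univ (c i))
    (hrconv : ConvexOn ℝ univ r)
    (κ L : ℝ) (Li : Fin m → ℝ)
    (hκ0 : 0 < κ) (hκ1 : κ ≤ 1) (hL : 0 < L) (hLi : ∀ i, 0 < Li i)
    (hfholder : ∀ x y, ‖f' x - f' y‖ ≤ L * ‖x - y‖ ^ κ)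
    (hcholder : ∀ i x y, ‖c' i x - c' i y‖ ≤ Li i * ‖x - y‖ ^ κ)
    -- the Slater point
    (xhat : EuclideanSpace ℝ (Fin n)) (hxhatX : xhat ∈ X) (hxhat : ∀ i, c i xhat < 0)
    -- the feasible base point
    (x : EuclideanSpace ℝ (Fin n)) (hxX : x ∈ X) (hxfeas : ∀ i, c i x ≤ 0)
    -- KKT conditions of the GHMA subproblem (CP_x)
    (zstar : EuclideanSpace ℝ (Fin n)) (hzX : zstar ∈ X)
    (μ : Fin m → ℝ) (hμ : ∀ i, 0 ≤ μ i)
    (l : EuclideanSpace ℝ (Fin n)) (hl : l ∈ subgrad r zstar)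
    (hstat : ∀ z ∈ X, 0 ≤
      ⟪f' x + (L * ‖zstar - x‖ ^ (κ - 1)) • (zstar - x) +
        (∑ i, μ i • (c' i x + (Li i * ‖zstar - x‖ ^ (κ - 1)) • (zstar - x))) + l,
        z - zstar⟫)
    (hconstr : ∀ i, c i x + ⟪c' i x, zstar - x⟫ +
      (Li i / (κ + 1)) * ‖zstar - x‖ ^ (κ + 1) ≤ 0)
    (hcomp : ∀ i, μ i * (c i x + ⟪c' i x, zstar - x⟫ +
      (Li i / (κ + 1)) * ‖zstar - x‖ ^ (κ + 1)) = 0)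
    -- the constants
    (C₁ : ℝ) (hC₁ : 0 < C₁)
    (hC₁a : ‖x - zstar‖ ≤ C₁) (hC₁b : ‖x - xhat‖ ≤ C₁) (hC₁c : ‖zstar - xhat‖ ≤ C₁)
    (Fstar : ℝ) (hFstar : Fstar ≤ f zstar + r zstar)
    -- smallness of the residual: ‖z* − x‖ ≤ min_i (−cᵢ(x̂)/(6LᵢC₁))^{1/κ}
    (hsmall : ∀ i, ‖zstar - x‖ ≤ (-c i xhat / (6 * Li i * C₁)) ^ (1 / κ)) :
    ∀ i, μ i ≤ (2 * ((f xhat + r xhat) - Fstar) + 4 * L * C₁ ^ (κ + 1)) /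
      (Finset.univ.inf' ⟨⟨0, hm⟩, Finset.mem_univ _⟩ fun j => -c j xhat) :=
  ghma_dual_boundedness_general hm X f r c f' c' hf hc hfconv hcconv κ L Li hκ0 hL hLi hfholder xhat
    hxhatX hxhat x zstar μ hμ l hl hstat hcomp C₁ hC₁ hC₁a hC₁c Fstar hFstar hsmall
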